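/- Let q be a prime power, n coprime to q, θ a primitive n-th root of unity, s coprime to n, t with qt ≡ t (mod n), and P a μ_q-invariant subset of Z/nZ. Then f_{ρ_{s,t}(P)}(X) = gcd(f_P(θ^{−t} X^{s^{-1}}), X^n − 1) as monic polynomials over F_q. -/
import Mathlib

open Polynomial
open scoped Classical

/-- `f_P(X) = ∏_{i∈P} (X − θ^i)` for a subset `P ⊆ ℤ/nℤ`. -/
noncomputable def fPoly {E : Type*} [Field E] {n : ℕ} (θ : E) (P : Finset (ZMod n)) : E[X] :=
  ∏ i ∈ P, (X - C (θ ^ i.val))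

/-- for a `μ_q`-invariant subset `P ⊆ ℤ/nℤ`,
`f_{ρ_{s,t}(P)}(X) = gcd(f_P(θ^{−t} X^{s⁻¹}), X^n − 1)` (the gcd being taken monic,
i.e. normalized). -/
theorem stmt5 (F : Type*) [Field F] [Fintype F] (n : ℕ) (hn : 0 < n)
    (hcop : Nat.Coprime (Fintype.card F) n)
    (E : Type*) [Field E] [Algebra F E] (θ : E) (hθ : IsPrimitiveRoot θ n)
    (s s' t : ℕ) (hs : Nat.Coprime s n) (hs' : s * s' ≡ 1 [MOD n])
    (ht : Fintype.card F * t ≡ t [MOD n])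
    (P : Finset (ZMod n))
    (hP : P.image (fun i => (Fintype.card F : ZMod n) * i) = P) :
    fPoly θ (P.image fun i => (s : ZMod n) * (i + (t : ZMod n))) =
      gcd ((fPoly θ P).comp (C (θ ^ t)⁻¹ * X ^ s')) (X ^ n - 1 : E[X]) := by
  haveI : NeZero n := ⟨hn.ne'⟩
  have hθ1 : θ ^ n = 1 := hθ.pow_eq_one
  have hθne : θ ≠ 0 := hθ.ne_zero hn.ne'
  have hpowA : ∀ a : ℕ, θ ^ ((a : ZMod n)).val = θ ^ a := by
    intro a
    rw [ZMod.val_natCast]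
    conv_rhs => rw [← Nat.div_add_mod a n]
    rw [pow_add, pow_mul, hθ1, one_pow, one_mul]
  have hmodeq : ∀ a b : ℕ, a ≡ b [MOD n] → θ ^ a = θ ^ b := by
    intro a b hab
    rw [← hpowA a, ← hpowA b, (ZMod.natCast_eq_natCast_iff _ _ _).mpr hab]
  have einj : Function.Injective (fun k : ZMod n => θ ^ k.val) := by
    intro k k' h
    exact ZMod.val_injective n (hθ.pow_inj (ZMod.val_lt k) (ZMod.val_lt k') h)
  set Q := P.image (fun i => (s : ZMod n) * (i + (t : ZMod n))) with hQdef
  set g := (fPoly θ P).comp (C (θ ^ t)⁻¹ * X ^ s') with hgdef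
  -- evaluation of g at θ^k.val
  have hgeval : ∀ x : E, g.eval x = ∏ i ∈ P, ((θ ^ t)⁻¹ * x ^ s' - θ ^ i.val) := by
    intro x
    simp [hgdef, fPoly, eval_comp, eval_prod]
  have hkey : ∀ (i : ZMod n), i ∈ P →
      (θ ^ t)⁻¹ * (θ ^ (((s : ZMod n) * (i + (t : ZMod n))).val)) ^ s' = θ ^ i.val := by
    intro i hi
    have hk : (s : ZMod n) * (i + (t : ZMod n)) = ((s * (i.val + t) : ℕ) : ZMod n) := by
      push_cast
      rw [ZMod.natCast_val, ZMod.cast_id]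
    rw [hk, hpowA, ← pow_mul]
    have hmod : s * (i.val + t) * s' ≡ i.val + t [MOD n] := by
      calc s * (i.val + t) * s' = s * s' * (i.val + t) := by ring
        _ ≡ 1 * (i.val + t) [MOD n] := Nat.ModEq.mul_right _ hs'
        _ = i.val + t := by ring
    rw [hmodeq _ _ hmod, pow_add]
    field_simp
  have hroot : ∀ k : ZMod n, g.eval (θ ^ k.val) = 0 ↔ k ∈ Q := by
    intro k
    rw [hgeval]
    constructor
    · intro h
      obtain ⟨i, hi, hz⟩ := Finset.prod_eq_zero_iff.mp h
      have hv : θ ^ (k.val * s') = θ ^ (i.val + t) := by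
        have h1 : (θ ^ t)⁻¹ * (θ ^ k.val) ^ s' = θ ^ i.val := by
          rwa [sub_eq_zero] at hz
        have h2 : (θ ^ k.val) ^ s' = θ ^ i.val * θ ^ t := by
          field_simp at h1
          linear_combination h1
        rw [← pow_mul] at h2
        rw [h2, pow_add]
      -- raise to power s
      have hvs : θ ^ (k.val * s' * s) = θ ^ ((i.val + t) * s) := by
        rw [pow_mul, hv, ← pow_mul]
      have hm1 : k.val * s' * s ≡ k.val [MOD n] := by
        calc k.val * s' * s = k.val * (s * s') := by ring
          _ ≡ k.val * 1 [MOD n] := Nat.ModEq.mul_left _ hs'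
          _ = k.val := by ring
      have hkk : θ ^ k.val = θ ^ (s * (i.val + t)) := by
        rw [← hmodeq _ _ hm1, hvs, mul_comm]
      have : k = ((s * (i.val + t) : ℕ) : ZMod n) := by
        apply einj
        simp only
        rw [hpowA]
        exact hkk
      rw [this]
      refine Finset.mem_image.mpr ⟨i, hi, ?_⟩
      push_cast
      rw [ZMod.natCast_val, ZMod.cast_id]
    · intro hk
      obtain ⟨i, hi, rfl⟩ := Finset.mem_image.mp hk
      apply Finset.prod_eq_zero hi
      rw [sub_eq_zero]
      exact hkey i hi
  -- full factorization of X^n - 1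
  have hfull : (X ^ n - 1 : E[X]) = ∏ k : ZMod n, (X - C (θ ^ k.val)) := by
    have h1 : (X ^ n - 1 : E[X]) = X ^ n - C ((1 : E) ^ n) := by rw [one_pow, map_one]
    rw [h1, X_pow_sub_C_eq_prod hθ hn rfl]
    simp only [mul_one]
    refine Finset.prod_nbij' (fun i => (i : ZMod n)) (fun k => k.val) ?_ ?_ ?_ ?_ ?_ <;>
      intro a ha
    · exact Finset.mem_univ _
    · exact Finset.mem_range.mpr (ZMod.val_lt a)
    · show ((a : ZMod n)).val = a
      rw [ZMod.val_natCast]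
      exact Nat.mod_eq_of_lt (Finset.mem_range.mp ha)
    · simp [ZMod.natCast_val, ZMod.cast_id]
    · show X - C (θ ^ a) = X - C (θ ^ ((a : ZMod n)).val)
      rw [hpowA]
  have hQprod : fPoly θ Q = ∏ k ∈ Q, (X - C (θ ^ k.val)) := rfl
  have hmonicQ : (fPoly θ Q).Monic := monic_prod_of_monic _ _ fun _ _ => monic_X_sub_C _
  have hnzXn : (X ^ n - 1 : E[X]) ≠ 0 := by
    have h1 : (X ^ n - 1 : E[X]) = X ^ n - C 1 := by rw [map_one]
    rw [h1]
    exact X_pow_sub_C_ne_zero hn 1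
  have dvd1 : fPoly θ Q ∣ g := by
    rw [hQprod]
    refine Finset.prod_dvd_of_coprime ((pairwise_coprime_X_sub_C einj).set_pairwise _) ?_
    intro k hk
    exact dvd_iff_isRoot.mpr ((hroot k).mpr hk)
  have dvd2 : fPoly θ Q ∣ (X ^ n - 1 : E[X]) := by
    rw [hQprod, hfull]
    exact Finset.prod_dvd_prod_of_subset Q Finset.univ _ (Finset.subset_univ Q)
  have hgcdne : gcd g (X ^ n - 1 : E[X]) ≠ 0 := by
    intro h
    exact hnzXn ((gcd_eq_zero_iff _ _).mp h).2
  have hmonicG : (gcd g (X ^ n - 1 : E[X])).Monic := by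
    have := Polynomial.monic_normalize hgcdne
    rwa [normalize_gcd] at this
  have dvd3 : gcd g (X ^ n - 1 : E[X]) ∣ fPoly θ Q := by
    have hsplit : (X ^ n - 1 : E[X]) = fPoly θ Q * ∏ k ∈ Qᶜ, (X - C (θ ^ k.val)) := by
      rw [hfull, hQprod, Finset.prod_mul_prod_compl]
    have hcopM : IsCoprime (gcd g (X ^ n - 1 : E[X])) (∏ k ∈ Qᶜ, (X - C (θ ^ k.val))) := by
      apply IsCoprime.prod_right
      intro k hk
      refine (((irreducible_X_sub_C (θ ^ k.val)).coprime_iff_not_dvd).mpr ?_).symm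
      intro hdvd
      have h1 : (X - C (θ ^ k.val)) ∣ g := hdvd.trans (gcd_dvd_left _ _)
      have h2 : k ∈ Q := (hroot k).mp (dvd_iff_isRoot.mp h1)
      exact (Finset.mem_compl.mp hk) h2
    have h3 : gcd g (X ^ n - 1 : E[X]) ∣ fPoly θ Q * ∏ k ∈ Qᶜ, (X - C (θ ^ k.val)) := by
      rw [← hsplit]; exact gcd_dvd_right _ _
    exact hcopM.dvd_of_dvd_mul_right h3
  exact eq_of_monic_of_associated hmonicQ hmonicG (associated_of_dvd_dvd (dvd_gcd dvd1 dvd2) dvd3)
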